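/- Assume β < 1/2, and let B₂ be any bounded continuous function on ℝ with f_G^{⋆2}(λ) = B₂(λ)|λ|^{2β−1} for almost every λ. Define V_j := Σ_{ℓ=2}^{∞} c_ℓ² ∫_ℝ f_G^{⋆ℓ}(λ) |ψ̂(2^j λ)|² dλ. Then lim_{j→∞} 2^{2jβ} V_j = c₂² · B₂(0) · ∫_ℝ |λ|^{2β−1} |ψ̂(λ)|² dλ. -/

import Mathlib

/-!
With `a = 2^j`, the `ℓ`-th term of `2^{2jβ} V_j` pairs `f_G^{⋆ℓ}` with the dilation
`a^{2β} |ψ̂(a ·)|²`, which leaves `∫ |λ|^{2β-1} |ψ̂(λ)|² dλ` unchanged.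
For `ℓ = 2` the singularity `f_G^{⋆2} = B₂ |·|^{2β-1}` turns the pairing into
`∫ B₂(λ / a) |λ|^{2β-1} |ψ̂(λ)|² dλ → B₂(0) ∫ |λ|^{2β-1} |ψ̂(λ)|² dλ`, and the same computation
bounds the pairing translated by `y` by `sup |B₂|` times the Riesz potential
`∫ |λ - t|^{2β-1} |ψ̂(λ)|² dλ` at `t = a y`, which is bounded and vanishes as `|t| → ∞`.
Each further convolution with the probability density `f_G` averages such translated pairings, so
the terms with `ℓ ≥ 3` stay uniformly bounded and tend to `0` by dominated convergence;
dominated convergence for the series weighted by the summable `c_ℓ²` concludes.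
-/

open MeasureTheory Filter

/-- Convolution of two real functions on ℝ. -/
noncomputable def conv (f g : ℝ → ℝ) (x : ℝ) : ℝ := ∫ y : ℝ, f (x - y) * g y

/-- ℓ-fold convolution of `f` with itself: `iterConv f 1 = f`,
`iterConv f (ℓ+1) = (iterConv f ℓ) ⋆ f`. Junk value `0` at `ℓ = 0`. -/
noncomputable def iterConv (f : ℝ → ℝ) : ℕ → ℝ → ℝ
  | 0 => fun _ => 0
  | 1 => f
  | (n + 2) => conv (iterConv f (n + 1)) f

/-- Fourier transform `ψ̂(λ) = ∫ e^{-iλt} ψ(t) dt`. -/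
noncomputable def fhat (ψ : ℝ → ℝ) (l : ℝ) : ℂ :=
  ∫ t : ℝ, Complex.exp (-(Complex.I * (l : ℂ) * (t : ℂ))) * (ψ t : ℂ)

open Set Topology

lemma cocompact_real_isCountablyGenerated : (cocompact ℝ).IsCountablyGenerated := by
  rw [cocompact_eq_atBot_atTop]
  infer_instance

lemma tendsto_add_left_cocompact (u : ℝ) :
    Tendsto (fun t => u + t) (cocompact ℝ) (cocompact ℝ) :=
  (Homeomorph.addLeft u).toCocompactMap.cocompact_tendsto'

lemma tendsto_sub_left_cocompact (u : ℝ) :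
    Tendsto (fun t => u - t) (cocompact ℝ) (cocompact ℝ) :=
  (Homeomorph.subLeft u).toCocompactMap.cocompact_tendsto'

lemma Continuous.exists_forall_abs_le_of_tendsto_cocompact {g : ℝ → ℝ} (hg : Continuous g)
    (hg0 : Tendsto g (cocompact ℝ) (𝓝 0)) : ∃ M, ∀ x, |g x| ≤ M := by
  obtain ⟨M, hM⟩ := isBounded_iff_forall_norm_le.1
    (ZeroAtInftyContinuousMap.isBounded_range ⟨⟨g, hg⟩, hg0⟩)
  exact ⟨M, fun x => hM _ ⟨x, rfl⟩⟩

lemma integrable_comp_abs_of_integrableOn_Ioi {k : ℝ → ℝ} (hk : IntegrableOn k (Ioi 0)) :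
    Integrable fun x => k |x| := by
  have hk' : IntegrableOn (fun x => k |x|) (Ioi 0) :=
    hk.congr_fun (fun x hx => by rw [abs_of_pos hx]) measurableSet_Ioi
  rw [← integrableOn_univ, ← Iic_union_Ioi (a := (0 : ℝ)), integrableOn_union]
  refine ⟨?_, hk'⟩
  have hneg : MeasurableEmbedding fun x : ℝ => -x := (Homeomorph.neg ℝ).measurableEmbedding
  rw [← Measure.map_neg_eq_self (volume : Measure ℝ), hneg.integrableOn_map_iff]
  simp only [Function.comp_def, abs_neg, neg_preimage, neg_Iic, neg_zero]
  exact Iff.mpr integrableOn_Ici_iff_integrableOn_Ioi hk'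

lemma integrable_abs_rpow_mul_exp_neg_mul_abs {s b : ℝ} (hs : -1 < s) (hb : 0 < b) :
    Integrable fun x : ℝ => |x| ^ s * Real.exp (-b * |x|) := by
  refine integrable_comp_abs_of_integrableOn_Ioi (k := fun x => x ^ s * Real.exp (-b * x)) ?_
  simpa using integrableOn_rpow_mul_exp_neg_mul_rpow hs one_pos hb

lemma tendsto_abs_rpow_mul_exp_neg_mul_abs_cocompact (s : ℝ) {b : ℝ} (hb : 0 < b) :
    Tendsto (fun x : ℝ => |x| ^ s * Real.exp (-b * |x|)) (cocompact ℝ) (𝓝 0) :=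
  (tendsto_rpow_mul_exp_neg_mul_atTop_nhds_zero s b hb).comp tendsto_norm_cocompact_atTop

noncomputable def rieszNear (s u : ℝ) : ℝ := (Ioo 0 1).indicator (· ^ s) |u|

noncomputable def rieszFar (s u : ℝ) : ℝ := (Ioo 0 1)ᶜ.indicator (· ^ s) |u|

section RieszKernel

variable {s : ℝ}

lemma rieszNear_add_rieszFar (s u : ℝ) : rieszNear s u + rieszFar s u = |u| ^ s :=
  indicator_self_add_compl_apply _ _ _

@[fun_prop]
lemma measurable_rieszNear (s : ℝ) : Measurable (rieszNear s) :=
  ((measurable_id.pow_const s).indicator measurableSet_Ioo).comp measurable_abs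

@[fun_prop]
lemma measurable_rieszFar (s : ℝ) : Measurable (rieszFar s) :=
  ((measurable_id.pow_const s).indicator measurableSet_Ioo.compl).comp measurable_abs

lemma rieszNear_nonneg (s u : ℝ) : 0 ≤ rieszNear s u :=
  indicator_nonneg (fun _ hx => Real.rpow_nonneg hx.1.le s) _

lemma rieszFar_nonneg (s u : ℝ) : 0 ≤ rieszFar s u :=
  indicator_nonneg (fun _ _ => Real.rpow_nonneg (abs_nonneg u) s) _

lemma rieszFar_le_one (hs : s ≤ 0) (u : ℝ) : rieszFar s u ≤ 1 := by
  unfold rieszFar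
  by_cases hu : |u| ∈ (Ioo 0 1)ᶜ
  · rw [indicator_of_mem hu]
    rcases (abs_nonneg u).eq_or_lt with h0 | hpos
    · rw [← h0]
      exact Real.zero_rpow_le_one s
    · exact Real.rpow_le_one_of_one_le_of_nonpos (not_lt.1 fun h => hu ⟨hpos, h⟩) hs
  · rw [indicator_of_notMem hu]
    exact zero_le_one

lemma integrable_rieszNear (hs : -1 < s) : Integrable (rieszNear s) :=
  integrable_comp_abs_of_integrableOn_Ioi <|
    ((intervalIntegral.integrableOn_Ioo_rpow_iff one_pos).2 hs).integrable_indicator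
      measurableSet_Ioo |>.integrableOn

lemma tendsto_rieszFar_cocompact (hs : s < 0) :
    Tendsto (rieszFar s) (cocompact ℝ) (𝓝 0) := by
  have habs : Tendsto (fun u : ℝ => |u|) (cocompact ℝ) atTop := tendsto_norm_cocompact_atTop
  have hpow : Tendsto (fun u : ℝ => |u| ^ s) (cocompact ℝ) (𝓝 0) := by
    simpa only [neg_neg, Function.comp_def] using (tendsto_rpow_neg_atTop (neg_pos.2 hs)).comp habs
  refine hpow.congr' ?_
  filter_upwards [habs.eventually_ge_atTop 1] with u hu
  exact (indicator_of_mem (s := (Ioo 0 1)ᶜ) (fun h => h.2.not_ge hu) (· ^ s)).symm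

end RieszKernel

/-- `∫ |w - t| ^ s * g w`, written in the variable `u = w - t`. -/
noncomputable def rieszPotential (s : ℝ) (g : ℝ → ℝ) (t : ℝ) : ℝ := ∫ u, |u| ^ s * g (u + t)

section RieszPotential

variable {s M : ℝ} {g : ℝ → ℝ}

lemma integrable_rieszNear_mul_comp_add (hs : -1 < s) (hg : Continuous g)
    (hM : ∀ x, |g x| ≤ M) (t : ℝ) : Integrable fun u => rieszNear s u * g (u + t) :=
  (integrable_rieszNear hs).mul_bdd (by fun_prop) (ae_of_all _ fun u => hM (u + t))

lemma integrable_rieszFar_mul_comp_add (hs : s ≤ 0) (hg : Integrable g) (t : ℝ) :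
    Integrable fun u => rieszFar s u * g (u + t) :=
  (hg.comp_add_right t).bdd_mul (measurable_rieszFar s).aestronglyMeasurable
    (ae_of_all _ fun u => by
      rw [Real.norm_eq_abs, abs_of_nonneg (rieszFar_nonneg s u)]
      exact rieszFar_le_one hs u)

lemma integrable_abs_rpow_mul_comp_add (hs : -1 < s) (hs0 : s ≤ 0) (hg : Continuous g)
    (hM : ∀ x, |g x| ≤ M) (hgi : Integrable g) (t : ℝ) :
    Integrable fun u => |u| ^ s * g (u + t) := by
  simp_rw [← rieszNear_add_rieszFar s, add_mul]
  exact (integrable_rieszNear_mul_comp_add hs hg hM t).add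
    (integrable_rieszFar_mul_comp_add hs0 hgi t)

lemma rieszPotential_eq_add (hs : -1 < s) (hs0 : s ≤ 0) (hg : Continuous g)
    (hM : ∀ x, |g x| ≤ M) (hgi : Integrable g) (t : ℝ) :
    rieszPotential s g t =
      (∫ u, rieszNear s u * g (u + t)) + ∫ u, rieszFar s u * g (u + t) := by
  simp_rw [rieszPotential, ← rieszNear_add_rieszFar s, add_mul]
  exact integral_add (integrable_rieszNear_mul_comp_add hs hg hM t)
    (integrable_rieszFar_mul_comp_add hs0 hgi t)

lemma abs_rieszPotential_le (hs : -1 < s) (hs0 : s ≤ 0)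
    (hM : ∀ x, |g x| ≤ M) (hgi : Integrable g) (t : ℝ) :
    |rieszPotential s g t| ≤ M * (∫ u, rieszNear s u) + ∫ u, |g u| := by
  have hbound : Integrable fun u => M * rieszNear s u + |g (u + t)| :=
    ((integrable_rieszNear hs).const_mul M).add (hgi.comp_add_right t).abs
  calc |rieszPotential s g t| ≤ ∫ u, (M * rieszNear s u + |g (u + t)|) := by
        rw [← Real.norm_eq_abs]
        refine norm_integral_le_of_norm_le (f := fun u => |u| ^ s * g (u + t)) hbound
          (ae_of_all _ fun u => ?_)
        rw [Real.norm_eq_abs, abs_mul, abs_of_nonneg (Real.rpow_nonneg (abs_nonneg u) s),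
          ← rieszNear_add_rieszFar s, add_mul]
        exact add_le_add
          ((mul_le_mul_of_nonneg_left (hM _) (rieszNear_nonneg s u)).trans_eq (mul_comm _ _))
          (mul_le_of_le_one_left (abs_nonneg _) (rieszFar_le_one hs0 u))
    _ = M * (∫ u, rieszNear s u) + ∫ u, |g u| := by
        rw [integral_add ((integrable_rieszNear hs).const_mul M) (hgi.comp_add_right t).abs,
          integral_const_mul, integral_add_right_eq_self (μ := volume) (fun u => |g u|) t]

lemma tendsto_rieszPotential_cocompact (hs : -1 < s) (hs0 : s < 0) (hg : Continuous g)
    (hM : ∀ x, |g x| ≤ M) (hgi : Integrable g) (hg0 : Tendsto g (cocompact ℝ) (𝓝 0)) :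
    Tendsto (rieszPotential s g) (cocompact ℝ) (𝓝 0) := by
  have := cocompact_real_isCountablyGenerated
  have hnear : Tendsto (fun t => ∫ u, rieszNear s u * g (u + t)) (cocompact ℝ) (𝓝 0) := by
    simpa only [integral_zero] using tendsto_integral_filter_of_dominated_convergence
      (l := cocompact ℝ) (F := fun t u => rieszNear s u * g (u + t)) (f := fun _ => 0)
      (fun u => rieszNear s u * M) (.of_forall fun t => by fun_prop)
      (.of_forall fun t => ae_of_all _ fun u => by
        rw [Real.norm_eq_abs, abs_mul, abs_of_nonneg (rieszNear_nonneg s u)]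
        exact mul_le_mul_of_nonneg_left (hM _) (rieszNear_nonneg s u))
      ((integrable_rieszNear hs).mul_const M)
      (ae_of_all _ fun u => by
        simpa only [mul_zero, Function.comp_def] using
          (hg0.comp (tendsto_add_left_cocompact u)).const_mul (rieszNear s u))
  have hfar : Tendsto (fun t => ∫ u, rieszFar s u * g (u + t)) (cocompact ℝ) (𝓝 0) := by
    have hshift : ∀ t, ∫ u, rieszFar s u * g (u + t) = ∫ w, rieszFar s (w - t) * g w := by
      intro t
      rw [← integral_sub_right_eq_self (fun u => rieszFar s u * g (u + t)) t]
      simp only [sub_add_cancel]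
    simp_rw [hshift]
    simpa only [integral_zero] using tendsto_integral_filter_of_dominated_convergence
      (l := cocompact ℝ) (F := fun t w => rieszFar s (w - t) * g w) (f := fun _ => 0)
      (fun w => |g w|) (.of_forall fun t =>
        ((measurable_rieszFar s).comp (measurable_sub_const t)).aestronglyMeasurable.mul
          hg.aestronglyMeasurable)
      (.of_forall fun t => ae_of_all _ fun w => by
        rw [Real.norm_eq_abs, abs_mul, abs_of_nonneg (rieszFar_nonneg s _)]
        exact mul_le_of_le_one_left (abs_nonneg _) (rieszFar_le_one hs0.le _))
      hgi.abs
      (ae_of_all _ fun w => by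
        simpa only [zero_mul, Function.comp_def] using ((tendsto_rieszFar_cocompact hs0).comp
          (tendsto_sub_left_cocompact w)).mul_const (g w))
  have hsum := hnear.add hfar
  rw [add_zero] at hsum
  exact hsum.congr fun t => (rieszPotential_eq_add hs hs0.le hg hM hgi t).symm

end RieszPotential

section Convolution

variable {f h G : ℝ → ℝ} {M : ℝ}

lemma conv_eq_convolution (h f : ℝ → ℝ) :
    conv h f = convolution f h (ContinuousLinearMap.mul ℝ ℝ) volume := by
  funext x
  simp only [conv, convolution, ContinuousLinearMap.mul_apply']
  exact integral_congr_ae (ae_of_all _ fun y => mul_comm _ _)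

lemma integrable_conv (hh : Integrable h) (hf : Integrable f) : Integrable (conv h f) := by
  rw [conv_eq_convolution]
  exact hf.integrable_convolution _ hh

lemma integrable_iterConv (hf : Integrable f) : ∀ m, Integrable (iterConv f (m + 1))
  | 0 => hf
  | m + 1 => integrable_conv (integrable_iterConv hf m) hf

lemma integral_conv_mul (hh : Integrable h) (hf : Integrable f) (hG : Continuous G)
    (hGM : ∀ x, |G x| ≤ M) :
    ∫ v, conv h f v * G v = ∫ z, f z * ∫ v, h v * G (v + z) := by
  have hprod : Integrable (Function.uncurry fun v z => h (v - z) * f z * G v)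
      (volume.prod volume) := by
    have hconv : Integrable (fun p : ℝ × ℝ => f p.2 * h (p.1 - p.2)) (volume.prod volume) := by
      simpa using hf.convolution_integrand (ContinuousLinearMap.mul ℝ ℝ) hh
    refine (hconv.bdd_mul (hG.comp continuous_fst).aestronglyMeasurable
      (ae_of_all _ fun p => hGM p.1)).congr (ae_of_all _ fun p => ?_)
    simp only [Function.uncurry, Function.comp_apply]
    ring
  simp_rw [conv, ← integral_mul_const]
  rw [integral_integral_swap hprod]
  refine integral_congr_ae (ae_of_all _ fun z => ?_)
  dsimp only
  rw [← integral_const_mul, ← integral_add_right_eq_self _ z]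
  simp only [add_sub_cancel_right]
  congr 1 with v
  ring

end Convolution

noncomputable def corr (F G : ℝ → ℝ) (y : ℝ) : ℝ := ∫ v, F v * G (v + y)

section Correlation

variable {f h F G : ℝ → ℝ} {M C : ℝ}

lemma continuous_corr (hF : Integrable F) (hG : Continuous G) (hGM : ∀ x, |G x| ≤ M) :
    Continuous (corr F G) :=
  continuous_of_dominated (fun y => by fun_prop)
    (fun y => ae_of_all _ fun v => by
      rw [Real.norm_eq_abs, abs_mul]
      exact mul_le_mul_of_nonneg_left (hGM _) (abs_nonneg _))
    (hF.abs.mul_const M) (ae_of_all _ fun v => by fun_prop)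

lemma corr_conv (hh : Integrable h) (hf : Integrable f) (hG : Continuous G)
    (hGM : ∀ x, |G x| ≤ M) (y : ℝ) :
    corr (conv h f) G y = ∫ z, f z * corr h G (y + z) := by
  rw [corr, integral_conv_mul hh hf (by fun_prop) fun x => hGM (x + y)]
  simp only [corr, add_assoc, add_comm y]

lemma abs_corr_conv_le (hf0 : ∀ x, 0 ≤ f x) (hf1 : ∫ x, f x = 1) (hh : Integrable h)
    (hf : Integrable f) (hG : Continuous G) (hGM : ∀ x, |G x| ≤ M)
    (hC : ∀ y, |corr h G y| ≤ C) (y : ℝ) : |corr (conv h f) G y| ≤ C := by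
  rw [corr_conv hh hf hG hGM, ← Real.norm_eq_abs]
  calc ‖∫ z, f z * corr h G (y + z)‖ ≤ ∫ z, f z * C :=
        norm_integral_le_of_norm_le (hf.mul_const C) (ae_of_all _ fun z => by
          rw [Real.norm_eq_abs, abs_mul, abs_of_nonneg (hf0 z)]
          exact mul_le_mul_of_nonneg_left (hC _) (hf0 z))
    _ = C := by rw [integral_mul_const, hf1, one_mul]

lemma tendsto_corr_conv {G : ℕ → ℝ → ℝ} (hh : Integrable h) (hf : Integrable f)
    (hG : ∀ j, Continuous (G j)) (hGM : ∀ j, ∃ M, ∀ x, |G j x| ≤ M)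
    (hC : ∀ j y, |corr h (G j) y| ≤ C)
    (hlim : ∀ᵐ y, Tendsto (fun j => corr h (G j) y) atTop (𝓝 0)) (y : ℝ) :
    Tendsto (fun j => corr (conv h f) (G j) y) atTop (𝓝 0) := by
  choose M hM using hGM
  simp_rw [corr_conv hh hf (hG _) (hM _)]
  have hlim' : ∀ᵐ z, Tendsto (fun j => corr h (G j) (y + z)) atTop (𝓝 0) :=
    (measurePreserving_add_left volume y).quasiMeasurePreserving.ae hlim
  simpa using tendsto_integral_of_dominated_convergence (F := fun j z => f z * corr h (G j) (y + z))
    (f := fun _ => 0) (fun z => |f z| * C)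
    (fun j => hf.aestronglyMeasurable.mul
      ((continuous_corr hh (hG j) (hM j)).comp
        (continuous_const.add continuous_id)).aestronglyMeasurable)
    (hf.abs.mul_const C)
    (fun j => ae_of_all _ fun z => by
      rw [Real.norm_eq_abs, abs_mul]
      exact mul_le_mul_of_nonneg_left (hC _ _) (abs_nonneg _))
    (hlim'.mono fun z hz => by simpa using hz.const_mul (f z))

end Correlation

section IteratedConvolution

variable {f : ℝ → ℝ} {C : ℝ}

lemma abs_corr_iterConv_le {G : ℝ → ℝ} (hf0 : ∀ x, 0 ≤ f x) (hf1 : ∫ x, f x = 1)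
    (hf : Integrable f) (hG : Continuous G) (hGM : ∃ M, ∀ x, |G x| ≤ M)
    (h2 : ∀ y, |corr (iterConv f 2) G y| ≤ C) : ∀ m y, |corr (iterConv f (m + 2)) G y| ≤ C
  | 0 => h2
  | m + 1 => abs_corr_conv_le hf0 hf1 (integrable_iterConv hf (m + 1)) hf hG hGM.choose_spec
      (abs_corr_iterConv_le hf0 hf1 hf hG hGM h2 m)

lemma tendsto_corr_iterConv {G : ℕ → ℝ → ℝ} (hf0 : ∀ x, 0 ≤ f x) (hf1 : ∫ x, f x = 1)
    (hf : Integrable f) (hG : ∀ j, Continuous (G j)) (hGM : ∀ j, ∃ M, ∀ x, |G j x| ≤ M)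
    (h2 : ∀ j y, |corr (iterConv f 2) (G j) y| ≤ C)
    (hlim2 : ∀ᵐ y, Tendsto (fun j => corr (iterConv f 2) (G j) y) atTop (𝓝 0)) :
    ∀ m y, Tendsto (fun j => corr (iterConv f (m + 3)) (G j) y) atTop (𝓝 0)
  | 0 => tendsto_corr_conv (integrable_iterConv hf 1) hf hG hGM h2 hlim2
  | m + 1 => tendsto_corr_conv (integrable_iterConv hf (m + 2)) hf hG hGM
      (fun j => abs_corr_iterConv_le hf0 hf1 hf (hG j) (hGM j) (h2 j) (m + 1))
      (ae_of_all _ (tendsto_corr_iterConv hf0 hf1 hf hG hGM h2 hlim2 m))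

end IteratedConvolution

noncomputable def dilation (s a : ℝ) (g : ℝ → ℝ) (x : ℝ) : ℝ := a ^ (1 + s) * g (a * x)

section Dilation

variable {s a M : ℝ} {g F : ℝ → ℝ}

lemma continuous_dilation (hg : Continuous g) : Continuous (dilation s a g) := by
  unfold dilation
  fun_prop

lemma abs_dilation_le (ha : 0 < a) (hM : ∀ x, |g x| ≤ M) (x : ℝ) :
    |dilation s a g x| ≤ a ^ (1 + s) * M := by
  rw [dilation, abs_mul, abs_of_pos (Real.rpow_pos_of_pos ha _)]
  exact mul_le_mul_of_nonneg_left (hM _) (Real.rpow_pos_of_pos ha _).le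

lemma dilation_nonneg (ha : 0 < a) (hg : ∀ x, 0 ≤ g x) (x : ℝ) : 0 ≤ dilation s a g x :=
  mul_nonneg (Real.rpow_pos_of_pos ha _).le (hg _)

lemma dilation_comp_add (s a : ℝ) (g : ℝ → ℝ) (v y : ℝ) :
    dilation s a g (v + y) = dilation s a (fun x => g (x + a * y)) v := by
  simp only [dilation, mul_add]

lemma abs_rpow_mul_dilation (ha : 0 < a) (F : ℝ → ℝ) (v : ℝ) :
    |v| ^ s * dilation s a F v = a * (|a * v| ^ s * F (a * v)) := by
  rw [dilation, abs_mul, abs_of_pos ha, Real.mul_rpow ha.le (abs_nonneg v),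
    Real.rpow_add ha, Real.rpow_one]
  ring

lemma integral_abs_rpow_mul_dilation (ha : 0 < a) (F : ℝ → ℝ) :
    ∫ v, |v| ^ s * dilation s a F v = ∫ w, |w| ^ s * F w := by
  simp_rw [abs_rpow_mul_dilation ha]
  rw [integral_const_mul, Measure.integral_comp_mul_left (fun w => |w| ^ s * F w),
    abs_of_pos (inv_pos.2 ha), smul_eq_mul, mul_inv_cancel_left₀ ha.ne']

lemma MeasureTheory.Integrable.abs_rpow_mul_dilation (hF : Integrable fun w => |w| ^ s * F w)
    (ha : 0 < a) :
    Integrable fun v => |v| ^ s * dilation s a F v := by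
  simp_rw [_root_.abs_rpow_mul_dilation ha]
  exact (hF.comp_mul_left' ha.ne').const_mul a

end Dilation

section SpectralScaling

variable {f B g : ℝ → ℝ} {s MB : ℝ}

lemma abs_corr_iterConv_two_dilation_le (hB : ∀ᵐ v, iterConv f 2 v = B v * |v| ^ s)
    (hBM : ∀ x, |B x| ≤ MB) (hg0 : ∀ x, 0 ≤ g x) {a : ℝ} (ha : 0 < a) {y : ℝ}
    (hgi : Integrable fun u => |u| ^ s * g (u + a * y)) :
    |corr (iterConv f 2) (dilation s a g) y| ≤ MB * rieszPotential s g (a * y) := by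
  have hbound : Integrable fun v => MB * (|v| ^ s * dilation s a (fun x => g (x + a * y)) v) :=
    (hgi.abs_rpow_mul_dilation ha).const_mul MB
  rw [← Real.norm_eq_abs]
  calc ‖corr (iterConv f 2) (dilation s a g) y‖
      ≤ ∫ v, MB * (|v| ^ s * dilation s a (fun x => g (x + a * y)) v) := by
        refine norm_integral_le_of_norm_le hbound (hB.mono fun v hv => ?_)
        rw [hv, dilation_comp_add, Real.norm_eq_abs, abs_mul, abs_mul,
          abs_of_nonneg (Real.rpow_nonneg (abs_nonneg v) s),
          abs_of_nonneg (dilation_nonneg ha (fun x => hg0 _) v), mul_assoc]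
        exact mul_le_mul_of_nonneg_right (hBM v)
          (mul_nonneg (Real.rpow_nonneg (abs_nonneg v) s) (dilation_nonneg ha (fun x => hg0 _) v))
    _ = MB * rieszPotential s g (a * y) := by
        rw [integral_const_mul, integral_abs_rpow_mul_dilation ha, rieszPotential]

lemma tendsto_corr_iterConv_two_dilation_zero (hB : ∀ᵐ v, iterConv f 2 v = B v * |v| ^ s)
    (hBc : Continuous B) (hBM : ∀ x, |B x| ≤ MB) {a : ℕ → ℝ} (ha : ∀ j, 0 < a j)
    (ha_top : Tendsto a atTop atTop) (hgi : Integrable fun w => |w| ^ s * g w) :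
    Tendsto (fun j => corr (iterConv f 2) (dilation s (a j) g) 0) atTop
      (𝓝 (B 0 * ∫ w, |w| ^ s * g w)) := by
  have hrescale : ∀ j, corr (iterConv f 2) (dilation s (a j) g) 0
      = ∫ w, B ((a j)⁻¹ * w) * (|w| ^ s * g w) := by
    intro j
    calc corr (iterConv f 2) (dilation s (a j) g) 0
        = ∫ v, |v| ^ s * dilation s (a j) (fun w => B ((a j)⁻¹ * w) * g w) v :=
          integral_congr_ae (hB.mono fun v hv => by
            simp only [hv, add_zero, dilation, inv_mul_cancel_left₀ (ha j).ne']
            ring)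
      _ = ∫ w, B ((a j)⁻¹ * w) * (|w| ^ s * g w) := by
          rw [integral_abs_rpow_mul_dilation (ha j)]
          congr 1 with w
          ring
  simp_rw [hrescale]
  rw [← integral_const_mul]
  refine tendsto_integral_of_dominated_convergence (fun w => MB * |(|w| ^ s * g w)|)
    (fun j => ((hBc.comp (continuous_const_mul _)).aestronglyMeasurable.mul
      hgi.aestronglyMeasurable)) (hgi.abs.const_mul MB)
    (fun j => ae_of_all _ fun w => by
      rw [Real.norm_eq_abs, abs_mul]
      exact mul_le_mul_of_nonneg_right (hBM _) (abs_nonneg _))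
    (ae_of_all _ fun w => ?_)
  have hscale : Tendsto (fun j => (a j)⁻¹ * w) atTop (𝓝 0) := by
    simpa using (tendsto_inv_atTop_zero.comp ha_top).mul_const w
  exact ((hBc.tendsto 0).comp hscale).mul_const _

lemma tendsto_corr_iterConv_two_dilation (hB : ∀ᵐ v, iterConv f 2 v = B v * |v| ^ s)
    (hBM : ∀ x, |B x| ≤ MB) (hs : -1 < s) (hs0 : s < 0) (hgc : Continuous g)
    (hg0 : ∀ x, 0 ≤ g x) {M : ℝ} (hM : ∀ x, |g x| ≤ M) (hgi : Integrable g)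
    (hg_lim : Tendsto g (cocompact ℝ) (𝓝 0)) {a : ℕ → ℝ} (ha : ∀ j, 0 < a j)
    (ha_top : Tendsto a atTop atTop) {y : ℝ} (hy : y ≠ 0) :
    Tendsto (fun j => corr (iterConv f 2) (dilation s (a j) g) y) atTop (𝓝 0) := by
  have hay : Tendsto (fun j => a j * y) atTop (cocompact ℝ) :=
    tendsto_cocompact_of_tendsto_dist_comp_atTop 0 <| by
      simpa [abs_mul, abs_of_pos (ha _)] using ha_top.atTop_mul_const (abs_pos.2 hy)
  have hriesz := ((tendsto_rieszPotential_cocompact hs hs0 hgc hM hgi hg_lim).comp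
    hay).const_mul MB
  rw [mul_zero] at hriesz
  exact squeeze_zero_norm (fun j => abs_corr_iterConv_two_dilation_le hB hBM hg0 (ha j)
    (integrable_abs_rpow_mul_comp_add hs hs0.le hgc hM hgi _)) hriesz

end SpectralScaling

theorem tendsto_tsum_mul_corr_iterConv_dilation {f B g : ℝ → ℝ} {s MB : ℝ} {w : ℕ → ℝ}
    (hw : Summable w) (hf0 : ∀ x, 0 ≤ f x) (hf : Integrable f) (hf1 : ∫ x, f x = 1)
    (hs : -1 < s) (hs0 : s < 0) (hBc : Continuous B) (hBM : ∀ x, |B x| ≤ MB)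
    (hB : ∀ᵐ v, iterConv f 2 v = B v * |v| ^ s) (hgc : Continuous g) (hg0 : ∀ x, 0 ≤ g x)
    (hgi : Integrable g) (hg_lim : Tendsto g (cocompact ℝ) (𝓝 0)) {a : ℕ → ℝ}
    (ha : ∀ j, 0 < a j) (ha_top : Tendsto a atTop atTop) :
    Tendsto (fun j => ∑' ℓ, w ℓ * corr (iterConv f (ℓ + 2)) (dilation s (a j) g) 0) atTop
      (𝓝 (w 0 * (B 0 * ∫ x, |x| ^ s * g x))) := by
  obtain ⟨M, hM⟩ := hgc.exists_forall_abs_le_of_tendsto_cocompact hg_lim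
  have hMB : 0 ≤ MB := (abs_nonneg _).trans (hBM 0)
  have hriesz_int := integrable_abs_rpow_mul_comp_add hs hs0.le hgc hM hgi
  set R := M * (∫ u, rieszNear s u) + ∫ u, |g u|
  have hG : ∀ j, Continuous (dilation s (a j) g) := fun j => continuous_dilation hgc
  have hGM : ∀ j, ∃ M', ∀ x, |dilation s (a j) g x| ≤ M' := fun j =>
    ⟨_, abs_dilation_le (ha j) hM⟩
  have hbound2 : ∀ j y, |corr (iterConv f 2) (dilation s (a j) g) y| ≤ MB * R := fun j y =>
    (abs_corr_iterConv_two_dilation_le hB hBM hg0 (ha j) (hriesz_int _)).trans <|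
      mul_le_mul_of_nonneg_left ((le_abs_self _).trans
        (abs_rieszPotential_le hs hs0.le hM hgi _)) hMB
  have hlim2 : ∀ᵐ y, Tendsto (fun j => corr (iterConv f 2) (dilation s (a j) g) y) atTop
      (𝓝 0) := by
    filter_upwards [compl_mem_ae_iff.2 (measure_singleton (0 : ℝ))] with y hy
    exact tendsto_corr_iterConv_two_dilation hB hBM hs hs0 hgc hg0 hM hgi hg_lim ha ha_top hy
  have hlim : ∀ ℓ, Tendsto (fun j => w ℓ * corr (iterConv f (ℓ + 2)) (dilation s (a j) g) 0)
      atTop (𝓝 (if ℓ = 0 then w 0 * (B 0 * ∫ x, |x| ^ s * g x) else 0))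
    | 0 => (tendsto_corr_iterConv_two_dilation_zero hB hBc hBM ha ha_top
        (by simpa using hriesz_int 0)).const_mul (w 0)
    | ℓ + 1 => by
        simpa using
          (tendsto_corr_iterConv hf0 hf1 hf hG hGM hbound2 hlim2 ℓ 0).const_mul (w (ℓ + 1))
  have hsum := tendsto_tsum_of_dominated_convergence (hw.abs.mul_right (MB * R)) hlim
    (.of_forall fun j ℓ => by
      rw [Real.norm_eq_abs, abs_mul]
      exact mul_le_mul_of_nonneg_left
        (abs_corr_iterConv_le hf0 hf1 hf (hG j) (hGM j) (hbound2 j) ℓ 0) (abs_nonneg _))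
  rwa [tsum_ite_eq] at hsum

lemma corr_dilation_zero (F g : ℝ → ℝ) (s a : ℝ) :
    corr F (dilation s a g) 0 = a ^ (1 + s) * ∫ v, F v * g (a * v) := by
  rw [corr, ← integral_const_mul]
  congr 1 with v
  rw [add_zero, dilation]
  ring

section ExponentialDecay

variable {F C : ℝ → ℂ} {K κ α : ℝ}

lemma norm_sq_le_of_eq_mul_abs_rpow (hF : ∀ l, F l = C l * ((|l| ^ α : ℝ) : ℂ))
    (hC : ∀ l, ‖C l‖ ≤ K * Real.exp (-κ * |l|)) (l : ℝ) :
    ‖F l‖ ^ 2 ≤ K ^ 2 * (|l| ^ (2 * α) * Real.exp (-(2 * κ) * |l|)) := by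
  have hpow : |l| ^ (2 * α) = (|l| ^ α) ^ 2 := by
    rw [mul_comm, Real.rpow_mul (abs_nonneg l), Real.rpow_two]
  have hexp : Real.exp (-(2 * κ) * |l|) = Real.exp (-κ * |l|) ^ 2 := by
    rw [← Real.exp_nat_mul]
    ring_nf
  rw [hF, norm_mul, Complex.norm_real, Real.norm_of_nonneg (Real.rpow_nonneg (abs_nonneg l) α),
    hpow, hexp]
  calc (‖C l‖ * |l| ^ α) ^ 2 ≤ (K * Real.exp (-κ * |l|) * |l| ^ α) ^ 2 := by
        gcongr
        exact hC l
    _ = _ := by ring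

lemma continuous_norm_sq_of_eq_mul_abs_rpow (hF : ∀ l, F l = C l * ((|l| ^ α : ℝ) : ℂ))
    (hCc : Continuous C) (hα : 0 ≤ α) : Continuous fun l => ‖F l‖ ^ 2 := by
  simp_rw [hF]
  fun_prop (disch := simp [hα])

lemma integrable_norm_sq_of_eq_mul_abs_rpow (hF : ∀ l, F l = C l * ((|l| ^ α : ℝ) : ℂ))
    (hCc : Continuous C) (hC : ∀ l, ‖C l‖ ≤ K * Real.exp (-κ * |l|)) (hα : 0 ≤ α)
    (hκ : 0 < κ) : Integrable fun l => ‖F l‖ ^ 2 :=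
  ((integrable_abs_rpow_mul_exp_neg_mul_abs (s := 2 * α) (b := 2 * κ) (by linarith)
    (by linarith)).const_mul (K ^ 2)).mono'
    (continuous_norm_sq_of_eq_mul_abs_rpow hF hCc hα).aestronglyMeasurable
    (ae_of_all _ fun l => by
      rw [Real.norm_of_nonneg (sq_nonneg _)]
      exact norm_sq_le_of_eq_mul_abs_rpow hF hC l)

lemma tendsto_norm_sq_cocompact_of_eq_mul_abs_rpow (hF : ∀ l, F l = C l * ((|l| ^ α : ℝ) : ℂ))
    (hC : ∀ l, ‖C l‖ ≤ K * Real.exp (-κ * |l|)) (hκ : 0 < κ) :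
    Tendsto (fun l => ‖F l‖ ^ 2) (cocompact ℝ) (𝓝 0) := by
  have hlim := (tendsto_abs_rpow_mul_exp_neg_mul_abs_cocompact (2 * α)
    (by linarith : 0 < 2 * κ)).const_mul (K ^ 2)
  rw [mul_zero] at hlim
  exact squeeze_zero (fun l => sq_nonneg _) (norm_sq_le_of_eq_mul_abs_rpow hF hC) hlim

end ExponentialDecay

theorem stmt_3_general
    (β : ℝ) (hβ : β ∈ Set.Ioo (0 : ℝ) 1) (hβhalf : β < 1 / 2)
    (f_G : ℝ → ℝ) (hfG_nonneg : ∀ x, 0 ≤ f_G x)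
    (hfG_int : Integrable f_G) (hfG_one : (∫ l : ℝ, f_G l) = 1)
    (ψ : ℝ → ℝ)
    (α K κ : ℝ) (hα : 1 ≤ α) (hκ : 0 < κ)
    (Cψ : ℝ → ℂ) (hCψ_cont : Continuous Cψ)
    (hCψ_bdd : ∀ l : ℝ, ‖Cψ l‖ ≤ K * Real.exp (-κ * |l|))
    (hhat : ∀ l : ℝ, fhat ψ l = Cψ l * ((|l| ^ α : ℝ) : ℂ))
    (c : ℕ → ℝ) (hc : Summable (fun ℓ : ℕ => (c (ℓ + 2)) ^ 2))
    (B₂ : ℝ → ℝ) (hB₂_cont : Continuous B₂) (hB₂_bdd : ∃ M : ℝ, ∀ x, |B₂ x| ≤ M)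
    (hB₂ : ∀ᵐ l : ℝ ∂volume, iterConv f_G 2 l = B₂ l * |l| ^ (2 * β - 1))
    (V : ℕ → ℝ)
    (hV : ∀ j : ℕ, V j =
      ∑' ℓ : ℕ, (c (ℓ + 2)) ^ 2 *
        ∫ l : ℝ, iterConv f_G (ℓ + 2) l * ‖fhat ψ ((2 : ℝ) ^ j * l)‖ ^ 2) :
    Tendsto (fun j : ℕ => (2 : ℝ) ^ (2 * (j : ℝ) * β) * V j) atTop
      (nhds ((c 2) ^ 2 * B₂ 0 *
        ∫ l : ℝ, |l| ^ (2 * β - 1) * ‖fhat ψ l‖ ^ 2)) := by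
  obtain ⟨MB, hMB⟩ := hB₂_bdd
  have hα0 : 0 ≤ α := by linarith
  have key := tendsto_tsum_mul_corr_iterConv_dilation hc hfG_nonneg hfG_int hfG_one
    (by linarith [hβ.1]) (by linarith) hB₂_cont hMB hB₂
    (continuous_norm_sq_of_eq_mul_abs_rpow hhat hCψ_cont hα0) (fun _ => sq_nonneg _)
    (integrable_norm_sq_of_eq_mul_abs_rpow hhat hCψ_cont hCψ_bdd hα0 hκ)
    (tendsto_norm_sq_cocompact_of_eq_mul_abs_rpow hhat hCψ_bdd hκ)
    (a := fun j => (2 : ℝ) ^ j) (fun j => by positivity)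
    (tendsto_pow_atTop_atTop_of_one_lt one_lt_two)
  convert key using 2 with j
  · have hscale : (2 : ℝ) ^ (2 * (j : ℝ) * β) = ((2 : ℝ) ^ j) ^ (1 + (2 * β - 1)) := by
      rw [← Real.rpow_natCast, ← Real.rpow_mul zero_le_two]
      ring_nf
    rw [hV j, ← tsum_mul_left, hscale]
    congr 1 with ℓ
    rw [corr_dilation_zero]
    ring
  · ring

theorem stmt_3
    (β : ℝ) (hβ : β ∈ Set.Ioo (0 : ℝ) 1) (hβhalf : β < 1 / 2)
    (C_G : ℝ → ℝ) (hCG_cont : Continuous C_G) (hCG_bdd : ∃ M : ℝ, ∀ x, C_G x ≤ M)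
    (hCG_nonneg : ∀ x, 0 ≤ C_G x) (hCG_even : ∀ x, C_G (-x) = C_G x)
    (hCG0 : 0 < C_G 0)
    (f_G : ℝ → ℝ) (hfG_nonneg : ∀ x, 0 ≤ f_G x)
    (hfG : ∀ x : ℝ, x ≠ 0 → f_G x = C_G x * |x| ^ (β - 1))
    (hfG_int : Integrable f_G) (hfG_one : (∫ l : ℝ, f_G l) = 1)
    (ψ : ℝ → ℝ) (hψ_int : Integrable ψ) (hψ_sq : Integrable (fun t => (ψ t) ^ 2))
    (hψ_zero : (∫ t : ℝ, ψ t) = 0)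
    (α K κ : ℝ) (hα : 1 ≤ α) (hK : 0 < K) (hκ : 0 < κ)
    (Cψ : ℝ → ℂ) (hCψ_cont : Continuous Cψ)
    (hCψ0 : 0 < (Cψ 0).re ∧ (Cψ 0).im = 0)
    (hCψ_bdd : ∀ l : ℝ, ‖Cψ l‖ ≤ K * Real.exp (-κ * |l|))
    (hhat : ∀ l : ℝ, fhat ψ l = Cψ l * ((|l| ^ α : ℝ) : ℂ))
    (c : ℕ → ℝ) (hc : Summable (fun ℓ : ℕ => (c (ℓ + 2)) ^ 2))
    (B₂ : ℝ → ℝ) (hB₂_cont : Continuous B₂) (hB₂_bdd : ∃ M : ℝ, ∀ x, |B₂ x| ≤ M)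
    (hB₂ : ∀ᵐ l : ℝ ∂volume, iterConv f_G 2 l = B₂ l * |l| ^ (2 * β - 1))
    (V : ℕ → ℝ)
    (hV : ∀ j : ℕ, V j =
      ∑' ℓ : ℕ, (c (ℓ + 2)) ^ 2 *
        ∫ l : ℝ, iterConv f_G (ℓ + 2) l * ‖fhat ψ ((2 : ℝ) ^ j * l)‖ ^ 2) :
    Tendsto (fun j : ℕ => (2 : ℝ) ^ (2 * (j : ℝ) * β) * V j) atTop
      (nhds ((c 2) ^ 2 * B₂ 0 *
        ∫ l : ℝ, |l| ^ (2 * β - 1) * ‖fhat ψ l‖ ^ 2)) :=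
  stmt_3_general β hβ hβhalf f_G hfG_nonneg hfG_int hfG_one ψ α K κ hα hκ Cψ hCψ_cont hCψ_bdd hhat c
    hc B₂ hB₂_cont hB₂_bdd hB₂ V hV
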